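/- arXiv:2505.19403 — 4 statements merged into one kernel-verified Lean document; each statement's English description precedes it below -/
import Mathlib

section
/- Let E be a finite-dimensional real inner product space, S1 symmetric positive definite and S2 symmetric positive semidefinite on E. If (H, Λ) and (H', Λ') both solve the ICS problem for (S1, S2) (i.e. ⟨S1 h_j, h_{j'}⟩ = δ_{jj'}, ⟨S2 h_j, h_{j'}⟩ = δ_{jj'} λ_j with λ non-increasing, and similarly for H', Λ'), then Λ = Λ'. -/
/-!
For every real `t`, the multiplicity of `t` in `Λ` is the dimension of `ker (S2 - t • S1)`: in an
ICS basis the form `⟪(S2 - t • S1) ·, ·⟫` is diagonal with entries `λ j - t`, so this kernel is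
spanned by the basis vectors with `λ j = t`. These dimensions depend only on `(S1, S2)`, and a
non-increasing sequence is determined by the multiplicities of its values.
-/

open RealInnerProductSpace Finset Module Submodule

lemma List.count_ofFn_eq_card_filter {α : Type*} [DecidableEq α] {n : ℕ} (f : Fin n → α)
    (a : α) :
    (List.ofFn f).count a = #{i | f i = a} := by
  rw [← Multiset.coe_count, ← Fin.univ_val_map, Multiset.count_map, card_def, filter_val]
  simp only [eq_comm]

theorem Antitone.eq_of_card_filter_eq {α : Type*} [LinearOrder α] {n : ℕ} {f g : Fin n → α}
    (hf : Antitone f) (hg : Antitone g) (hfg : ∀ a, #{i | f i = a} = #{i | g i = a}) :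
    f = g := by
  have hperm : (List.ofFn f).Perm (List.ofFn g) := by
    rw [List.perm_iff_count]
    intro a
    rw [List.count_ofFn_eq_card_filter, List.count_ofFn_eq_card_filter, hfg]
  exact List.ofFn_injective <| hperm.eq_of_pairwise' (r := (· ≥ ·))
    (List.pairwise_ofFn.mpr fun _ _ h => hf h.le) (List.pairwise_ofFn.mpr fun _ _ h => hg h.le)

section DiagonalInBasis

variable {E ι : Type*} [NormedAddCommGroup E] [InnerProductSpace ℝ E]
  [Fintype ι] [DecidableEq ι] {T : E →ₗ[ℝ] E} {H : Basis ι ℝ E} {d : ι → ℝ}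

lemma inner_apply_basis_of_diagonal
    (hT : ∀ i j, ⟪T (H i), H j⟫ = if i = j then d i else 0) (v : E) (j : ι) :
    ⟪T v, H j⟫ = H.repr v j * d j := by
  conv_lhs => rw [← H.sum_repr v]
  simp only [map_sum, map_smul, sum_inner, real_inner_smul_left, hT, mul_ite, mul_zero,
    sum_ite_eq', mem_univ, if_true]

lemma ker_eq_span_of_diagonal
    (hT : ∀ i j, ⟪T (H i), H j⟫ = if i = j then d i else 0) :
    LinearMap.ker T = span ℝ (H '' {i | d i = 0}) := by
  ext v
  rw [LinearMap.mem_ker, H.mem_span_image]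
  constructor
  · intro hv i hi
    have := inner_apply_basis_of_diagonal hT v i
    rw [hv, inner_zero_left] at this
    exact (mul_eq_zero.mp this.symm).resolve_left (Finsupp.mem_support_iff.mp hi)
  · intro hv
    refine InnerProductSpace.ext_inner_right_basis H fun j => ?_
    rw [inner_apply_basis_of_diagonal hT, inner_zero_left]
    by_cases hj : H.repr v j = 0
    · rw [hj, zero_mul]
    · rw [hv (Finsupp.mem_support_iff.mpr hj), mul_zero]

lemma finrank_ker_of_diagonal
    (hT : ∀ i j, ⟪T (H i), H j⟫ = if i = j then d i else 0) :
    finrank ℝ (LinearMap.ker T) = #{i | d i = 0} := by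
  have hli : LinearIndependent ℝ fun i : {i | d i = 0} => H i :=
    H.linearIndependent.comp _ Subtype.val_injective
  rw [ker_eq_span_of_diagonal hT, Set.image_eq_range, finrank_span_eq_card hli,
    Fintype.card_subtype]
  rfl

end DiagonalInBasis

lemma finrank_ker_pencil_eq_card {E ι : Type*} [NormedAddCommGroup E] [InnerProductSpace ℝ E]
    [Fintype ι] [DecidableEq ι] {S1 S2 : E →ₗ[ℝ] E} {H : Basis ι ℝ E} {lam : ι → ℝ}
    (h1 : ∀ i j, ⟪S1 (H i), H j⟫ = if i = j then 1 else 0)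
    (h2 : ∀ i j, ⟪S2 (H i), H j⟫ = if i = j then lam i else 0) (t : ℝ) :
    finrank ℝ (LinearMap.ker (S2 - t • S1)) = #{i | lam i = t} := by
  have hdiag : ∀ i j, ⟪(S2 - t • S1) (H i), H j⟫ = if i = j then lam i - t else 0 := by
    intro i j
    rw [LinearMap.sub_apply, LinearMap.smul_apply, inner_sub_left, real_inner_smul_left, h1, h2]
    split_ifs <;> ring
  simp only [finrank_ker_of_diagonal hdiag, sub_eq_zero]

theorem ics_spectrum_unique_general {E : Type*} [NormedAddCommGroup E] [InnerProductSpace ℝ E]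
    {p : ℕ}
    (S1 S2 : E →ₗ[ℝ] E)
    (H H' : Module.Basis (Fin p) ℝ E) (lam lam' : Fin p → ℝ)
    (hlam : Antitone lam) (hlam' : Antitone lam')
    (h1 : ∀ j j', ⟪S1 (H j), H j'⟫ = if j = j' then 1 else 0)
    (h2 : ∀ j j', ⟪S2 (H j), H j'⟫ = if j = j' then lam j else 0)
    (h1' : ∀ j j', ⟪S1 (H' j), H' j'⟫ = if j = j' then 1 else 0)
    (h2' : ∀ j j', ⟪S2 (H' j), H' j'⟫ = if j = j' then lam' j else 0) :
    lam = lam' :=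
  hlam.eq_of_card_filter_eq hlam' fun t => by
    rw [← finrank_ker_pencil_eq_card h1 h2, ← finrank_ker_pencil_eq_card h1' h2']

/-- Uniqueness of the ICS spectrum: two solutions of the ICS problem for `(S1, S2)`
have the same non-increasing eigenvalue sequence. -/
theorem ics_spectrum_unique {E : Type*} [NormedAddCommGroup E] [InnerProductSpace ℝ E]
    [FiniteDimensional ℝ E] {p : ℕ}
    (S1 S2 : E →ₗ[ℝ] E)
    (hS1sym : ∀ x y : E, ⟪S1 x, y⟫ = ⟪x, S1 y⟫)
    (hS2sym : ∀ x y : E, ⟪S2 x, y⟫ = ⟪x, S2 y⟫)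
    (hS1pos : ∀ x : E, x ≠ 0 → 0 < ⟪S1 x, x⟫)
    (hS2pos : ∀ x : E, 0 ≤ ⟪S2 x, x⟫)
    (H H' : Module.Basis (Fin p) ℝ E) (lam lam' : Fin p → ℝ)
    (hlam : Antitone lam) (hlam' : Antitone lam')
    (h1 : ∀ j j', ⟪S1 (H j), H j'⟫ = if j = j' then 1 else 0)
    (h2 : ∀ j j', ⟪S2 (H j), H j'⟫ = if j = j' then lam j else 0)
    (h1' : ∀ j j', ⟪S1 (H' j), H' j'⟫ = if j = j' then 1 else 0)
    (h2' : ∀ j j', ⟪S2 (H' j), H' j'⟫ = if j = j' then lam' j else 0) :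
    lam = lam' :=
  ics_spectrum_unique_general S1 S2 H H' lam lam' hlam hlam' h1 h2 h1' h2'
end

section
/- Let E be a finite-dimensional real inner product space, S1 symmetric positive definite and S2 symmetric positive semidefinite, and let (h_1,...,h_p; λ_1 ≥ ... ≥ λ_p) solve the ICS problem for (S1, S2). Then λ_1 = max over nonzero h ∈ E of ⟨S2 h, h⟩ / ⟨S1 h, h⟩, and the maximum is attained at h_1. -/
open RealInnerProductSpace

/-! In the coordinates `c` of the basis `h`, `⟪S1 v, v⟫ = ∑ c_j²` and `⟪S2 v, v⟫ = ∑ λ_j c_j²`,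
so the Rayleigh quotient is a weighted mean of the `λ_j` and hence at most `λ_1`. -/

section

variable {ι E : Type*} [Fintype ι] [DecidableEq ι] [NormedAddCommGroup E] [InnerProductSpace ℝ E]

theorem inner_map_self_eq_sum_of_diagonal (b : Module.Basis ι ℝ E) (S : E →ₗ[ℝ] E) (a : ι → ℝ)
    (hS : ∀ i j, ⟪S (b i), b j⟫ = if i = j then a i else 0) (v : E) :
    ⟪S v, v⟫ = ∑ i, a i * b.repr v i ^ 2 := by
  calc ⟪S v, v⟫ = ∑ j, ∑ i, b.repr v j * (b.repr v i * ⟪S (b i), b j⟫) := by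
        conv_lhs => rw [← b.sum_repr v]
        simp only [map_sum, map_smul, sum_inner, inner_sum, real_inner_smul_left,
          real_inner_smul_right]
    _ = ∑ i, a i * b.repr v i ^ 2 := by
        simp only [hS, mul_ite, mul_zero, Finset.sum_ite_eq', Finset.mem_univ, if_true]
        exact Finset.sum_congr rfl fun i _ => by ring

theorem inner_map_self_le_mul_of_diagonal (b : Module.Basis ι ℝ E) (S1 S2 : E →ₗ[ℝ] E)
    (a : ι → ℝ) {M : ℝ} (ha : ∀ i, a i ≤ M)
    (h1 : ∀ i j, ⟪S1 (b i), b j⟫ = if i = j then 1 else 0)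
    (h2 : ∀ i j, ⟪S2 (b i), b j⟫ = if i = j then a i else 0) (v : E) :
    ⟪S2 v, v⟫ ≤ M * ⟪S1 v, v⟫ := by
  rw [inner_map_self_eq_sum_of_diagonal b S2 a h2,
    inner_map_self_eq_sum_of_diagonal b S1 (fun _ => 1) h1, Finset.mul_sum]
  refine Finset.sum_le_sum fun i _ => ?_
  rw [one_mul]
  exact mul_le_mul_of_nonneg_right (ha i) (sq_nonneg _)

end

theorem ics_first_eigenvalue_max_general {E : Type*} [NormedAddCommGroup E]
    [InnerProductSpace ℝ E] {p : ℕ} (hp : 0 < p)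
    (S1 S2 : E →ₗ[ℝ] E)
    (hS1pos : ∀ x : E, x ≠ 0 → 0 < ⟪S1 x, x⟫)
    (h : Module.Basis (Fin p) ℝ E) (lam : Fin p → ℝ)
    (hlam : Antitone lam)
    (h1 : ∀ j j', ⟪S1 (h j), h j'⟫ = if j = j' then 1 else 0)
    (h2 : ∀ j j', ⟪S2 (h j), h j'⟫ = if j = j' then lam j else 0) :
    (∀ v : E, v ≠ 0 → ⟪S2 v, v⟫ / ⟪S1 v, v⟫ ≤ lam ⟨0, hp⟩) ∧
    ⟪S2 (h ⟨0, hp⟩), h ⟨0, hp⟩⟫ / ⟪S1 (h ⟨0, hp⟩), h ⟨0, hp⟩⟫ = lam ⟨0, hp⟩ := by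
  refine ⟨fun v hv => ?_, ?_⟩
  · rw [div_le_iff₀ (hS1pos v hv)]
    exact inner_map_self_le_mul_of_diagonal h S1 S2 lam (fun j => hlam (Nat.zero_le j)) h1 h2 v
  · simp [h1, h2]

/-- Courant–Fischer, first step: if `(h, lam)` solves the ICS problem for `(S1, S2)`,
then `lam 0 = max_{v ≠ 0} ⟪S2 v, v⟫ / ⟪S1 v, v⟫`, attained at `h 0`. -/
theorem ics_first_eigenvalue_max {E : Type*} [NormedAddCommGroup E]
    [InnerProductSpace ℝ E] [FiniteDimensional ℝ E] {p : ℕ} (hp : 0 < p)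
    (S1 S2 : E →ₗ[ℝ] E)
    (hS1sym : ∀ x y : E, ⟪S1 x, y⟫ = ⟪x, S1 y⟫)
    (hS2sym : ∀ x y : E, ⟪S2 x, y⟫ = ⟪x, S2 y⟫)
    (hS1pos : ∀ x : E, x ≠ 0 → 0 < ⟪S1 x, x⟫)
    (hS2pos : ∀ x : E, 0 ≤ ⟪S2 x, x⟫)
    (h : Module.Basis (Fin p) ℝ E) (lam : Fin p → ℝ)
    (hlam : Antitone lam)
    (h1 : ∀ j j', ⟪S1 (h j), h j'⟫ = if j = j' then 1 else 0)
    (h2 : ∀ j j', ⟪S2 (h j), h j'⟫ = if j = j' then lam j else 0) :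
    (∀ v : E, v ≠ 0 → ⟪S2 v, v⟫ / ⟪S1 v, v⟫ ≤ lam ⟨0, hp⟩) ∧
    ⟪S2 (h ⟨0, hp⟩), h ⟨0, hp⟩⟫ / ⟪S1 (h ⟨0, hp⟩), h ⟨0, hp⟩⟫ = lam ⟨0, hp⟩ :=
  ics_first_eigenvalue_max_general hp S1 S2 hS1pos h lam hlam h1 h2
end

section
/- Let E be a finite-dimensional real inner product space, S1 symmetric positive definite, S2 symmetric positive semidefinite, and (h_1,...,h_p; λ_1 ≥ ... ≥ λ_p) a solution of the ICS problem for (S1, S2). Then for each 1 ≤ j ≤ p, λ_j = max { ⟨S2 h, h⟩ / ⟨S1 h, h⟩ : h ≠ 0, ⟨S1 h, h_{j'}⟩ = 0 for all j' < j }. -/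
open RealInnerProductSpace

/-! In the `S1`-orthonormal basis `h` both quadratic forms are diagonal: writing `c = h.repr v`,
`⟪S1 v, v⟫ = ∑ cᵢ²` and `⟪S2 v, v⟫ = ∑ cᵢ² λᵢ`, while `S1`-orthogonality to `h j'` means `c j' = 0`.
So the Rayleigh quotient is a weighted mean of the `λᵢ` with `i ≥ j`, hence at most `λⱼ`,
and `v = h j` attains it. -/

section DiagonalForm

variable {E ι : Type*} [NormedAddCommGroup E] [InnerProductSpace ℝ E] [Fintype ι]
  [DecidableEq ι] (S : E →ₗ[ℝ] E) (b : Module.Basis ι ℝ E) (μ : ι → ℝ)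

theorem inner_map_eq_sum_repr_of_diagonal
    (hS : ∀ i i', ⟪S (b i), b i'⟫ = if i = i' then μ i else 0) (v w : E) :
    ⟪S v, w⟫ = ∑ i, b.repr v i * b.repr w i * μ i := by
  conv_lhs => rw [← b.sum_repr v, ← b.sum_repr w]
  simp only [map_sum, map_smul, sum_inner, inner_sum, real_inner_smul_left,
    real_inner_smul_right, hS, mul_ite, mul_zero, Finset.sum_ite_eq', Finset.mem_univ, if_true]
  exact Finset.sum_congr rfl fun i _ => by ring

theorem inner_map_basis_eq_repr_of_diagonal
    (hS : ∀ i i', ⟪S (b i), b i'⟫ = if i = i' then μ i else 0) (v : E) (i : ι) :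
    ⟪S v, b i⟫ = b.repr v i * μ i := by
  simp [inner_map_eq_sum_repr_of_diagonal S b μ hS, Finsupp.single_apply]

theorem inner_map_self_eq_sum_sq_of_diagonal
    (hS : ∀ i i', ⟪S (b i), b i'⟫ = if i = i' then μ i else 0) (v : E) :
    ⟪S v, v⟫ = ∑ i, b.repr v i ^ 2 * μ i := by
  simp only [inner_map_eq_sum_repr_of_diagonal S b μ hS, sq]

end DiagonalForm

theorem sum_mul_le_of_antitone_of_eq_zero_of_lt {ι : Type*} [Fintype ι] [LinearOrder ι]
    {w lam : ι → ℝ} (hlam : Antitone lam) (hw : ∀ i, 0 ≤ w i) (j : ι)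
    (hw_zero : ∀ i, i < j → w i = 0) :
    ∑ i, w i * lam i ≤ lam j * ∑ i, w i := by
  rw [Finset.mul_sum]
  refine Finset.sum_le_sum fun i _ => ?_
  rcases lt_or_ge i j with hij | hji
  · simp [hw_zero i hij]
  · rw [mul_comm (lam j)]
    exact mul_le_mul_of_nonneg_left (hlam hji) (hw i)

theorem ics_courant_fischer_general {E : Type*} [NormedAddCommGroup E]
    [InnerProductSpace ℝ E] {p : ℕ}
    (S1 S2 : E →ₗ[ℝ] E)
    (hS1pos : ∀ x : E, x ≠ 0 → 0 < ⟪S1 x, x⟫)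
    (h : Module.Basis (Fin p) ℝ E) (lam : Fin p → ℝ)
    (hlam : Antitone lam)
    (h1 : ∀ j j', ⟪S1 (h j), h j'⟫ = if j = j' then 1 else 0)
    (h2 : ∀ j j', ⟪S2 (h j), h j'⟫ = if j = j' then lam j else 0) :
    ∀ j : Fin p, IsGreatest
      {r : ℝ | ∃ v : E, v ≠ 0 ∧ (∀ j' : Fin p, j' < j → ⟪S1 v, h j'⟫ = 0) ∧
        r = ⟪S2 v, v⟫ / ⟪S1 v, v⟫}
      (lam j) := by
  intro j
  refine ⟨⟨h j, h.ne_zero j, fun j' hj' => by simp [h1, hj'.ne'], by simp [h1, h2]⟩, ?_⟩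
  rintro r ⟨v, hv, hortho, rfl⟩
  have hS1v := inner_map_self_eq_sum_sq_of_diagonal S1 h (fun _ => 1) h1 v
  have hrepr_zero : ∀ i, i < j → h.repr v i ^ 2 = 0 := fun i hi => by
    simpa using (inner_map_basis_eq_repr_of_diagonal S1 h (fun _ => 1) h1 v i).symm.trans
      (hortho i hi)
  rw [div_le_iff₀ (hS1pos v hv), inner_map_self_eq_sum_sq_of_diagonal S2 h lam h2, hS1v]
  simpa using sum_mul_le_of_antitone_of_eq_zero_of_lt hlam (fun i => sq_nonneg _) j hrepr_zero

/-- Courant–Fischer variational principle for ICS: if `(h, lam)` solves the ICS problem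
for `(S1, S2)`, then for each `j`, `lam j` is the maximum of `⟪S2 v, v⟫ / ⟪S1 v, v⟫` over
nonzero `v` that are `S1`-orthogonal to `h j'` for all `j' < j`. -/
theorem ics_courant_fischer {E : Type*} [NormedAddCommGroup E]
    [InnerProductSpace ℝ E] [FiniteDimensional ℝ E] {p : ℕ}
    (S1 S2 : E →ₗ[ℝ] E)
    (hS1sym : ∀ x y : E, ⟪S1 x, y⟫ = ⟪x, S1 y⟫)
    (hS2sym : ∀ x y : E, ⟪S2 x, y⟫ = ⟪x, S2 y⟫)
    (hS1pos : ∀ x : E, x ≠ 0 → 0 < ⟪S1 x, x⟫)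
    (hS2pos : ∀ x : E, 0 ≤ ⟪S2 x, x⟫)
    (h : Module.Basis (Fin p) ℝ E) (lam : Fin p → ℝ)
    (hlam : Antitone lam)
    (h1 : ∀ j j', ⟪S1 (h j), h j'⟫ = if j = j' then 1 else 0)
    (h2 : ∀ j j', ⟪S2 (h j), h j'⟫ = if j = j' then lam j else 0) :
    ∀ j : Fin p, IsGreatest
      {r : ℝ | ∃ v : E, v ≠ 0 ∧ (∀ j' : Fin p, j' < j → ⟪S1 v, h j'⟫ = 0) ∧
        r = ⟪S2 v, v⟫ / ⟪S1 v, v⟫}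
      (lam j) :=
  ics_courant_fischer_general S1 S2 hS1pos h lam hlam h1 h2
end

section
/- Let φ : E → F be a linear isometric isomorphism between finite-dimensional real inner product spaces, w : ℝ≥0 → ℝ measurable, and X an E-valued random vector with invertible covariance such that the w-weighted covariance Cov_w[X] exists, defined by ⟨Cov_w[X] x, y⟩ = E[w(‖Cov[X]^{-1/2}(X − EX)‖)² ⟨X − EX, x⟩⟨X − EX, y⟩]. Then Cov_w[φ(X)] = φ ∘ Cov_w[X] ∘ φ⁻¹. -/
open RealInnerProductSpace MeasureTheory

/-! Conjugating `R` by `φ` yields a positive square root of `φ ∘ Cov[X] ∘ φ⁻¹`, so by uniqueness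
of positive square roots `T = φ ∘ R ∘ φ⁻¹`. Since `φ` also commutes with expectation and preserves
norms and inner products, the integrand defining `⟪Cw' y, z⟫` is pointwise the one defining
`⟪Cw (φ⁻¹ y), φ⁻¹ z⟫`. -/

namespace LinearMap

variable {E F : Type*} [NormedAddCommGroup E] [InnerProductSpace ℝ E]
  [NormedAddCommGroup F] [InnerProductSpace ℝ F]

theorem IsSymmetric.isPositive_of_inner_pos {T : E →ₗ[ℝ] E} (hT : T.IsSymmetric)
    (hpos : ∀ x, x ≠ 0 → 0 < ⟪T x, x⟫) : T.IsPositive := by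
  refine T.isPositive_iff.2 ⟨hT, fun x => ?_⟩
  rcases eq_or_ne x 0 with rfl | hx
  · simp
  · exact (hpos x hx).le

/- On an eigenvector `v` of `T` with eigenvalue `c ≥ 0`, the defect `u = S v - c v` satisfies
`S u + c u = 0`; pairing with `u` gives `c ‖u‖² = 0`, pairing with `v` gives
`‖u‖² = -2 c ⟪u, v⟫`, so `‖u‖⁴ = 0`. -/
theorem IsPositive.eq_of_mul_self_eq [FiniteDimensional ℝ E] {S T : E →ₗ[ℝ] E}
    (hS : S.IsPositive) (hT : T.IsPositive) (h : S * S = T * T) : S = T := by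
  let b := hT.isSymmetric.eigenvectorBasis rfl
  refine b.toBasis.ext fun i => ?_
  set v := b i
  set c := hT.isSymmetric.eigenvalues rfl i
  have hc : 0 ≤ c := hT.nonneg_eigenvalues rfl i
  have hTv : T v = c • v := hT.isSymmetric.apply_eigenvectorBasis rfl i
  set u := S v - c • v
  have hSu : S u = -(c • u) := by
    have hSSv : S (S v) = c • c • v := by
      rw [← Module.End.mul_apply, h, Module.End.mul_apply, hTv, map_smul, hTv]
    simp only [u, map_sub, map_smul, hSSv]
    module
  have hcu : c * ‖u‖ ^ 2 = 0 := by
    have := hS.inner_nonneg_left u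
    rw [hSu, inner_neg_left, real_inner_smul_left, real_inner_self_eq_norm_sq] at this
    nlinarith [sq_nonneg ‖u‖]
  have huv : ‖u‖ ^ 2 = -2 * c * ⟪u, v⟫ := by
    have hsym := hS.isSymmetric u v
    rw [hSu, inner_neg_left, real_inner_smul_left] at hsym
    have : ⟪u, S v⟫ = ⟪u, u⟫ + c * ⟪u, v⟫ := by
      rw [← real_inner_smul_right, ← inner_add_right, sub_add_cancel]
    rw [real_inner_self_eq_norm_sq] at this
    linarith
  have hu : u = 0 := by
    have : ‖u‖ ^ 2 * ‖u‖ ^ 2 = 0 := by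
      calc ‖u‖ ^ 2 * ‖u‖ ^ 2 = -2 * ⟪u, v⟫ * (c * ‖u‖ ^ 2) := by rw [← mul_assoc, huv]; ring
        _ = 0 := by rw [hcu, mul_zero]
    simpa using this
  change S v = T v
  rw [hTv, ← sub_eq_zero]
  exact hu

theorem IsPositive.eq_conj_of_mul_self_eq_conj [FiniteDimensional ℝ F] {R : E →ₗ[ℝ] E}
    {T : F →ₗ[ℝ] F} (φ : E ≃ₗᵢ[ℝ] F) (hR : R.IsPositive) (hT : T.IsPositive)
    (h : ∀ y, T (T y) = φ (R (R (φ.symm y)))) :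
    T = φ.toLinearMap ∘ₗ R ∘ₗ φ.symm.toLinearMap := by
  refine (((isPositive_linearIsometryEquiv_conj_iff φ).2 hR).eq_of_mul_self_eq hT ?_).symm
  ext y
  simp [h]

end LinearMap

theorem covw_isometry_transport_general {E F : Type*}
    [NormedAddCommGroup E] [InnerProductSpace ℝ E]
    [NormedAddCommGroup F] [InnerProductSpace ℝ F] [FiniteDimensional ℝ F]
    {Ω : Type*} [MeasureSpace Ω] {μ : Measure Ω}
    (φ : E ≃ₗᵢ[ℝ] F)
    (w : ℝ → ℝ)
    (X : Ω → E)
    -- the covariance operator of `X`, assumed invertible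
    (CX : E →ₗ[ℝ] E)
    -- `R` is the symmetric positive definite square root of `CX`
    (R : E ≃ₗ[ℝ] E)
    (hRsym : ∀ x y : E, ⟪R x, y⟫ = ⟪x, R y⟫)
    (hRpos : ∀ x : E, x ≠ 0 → 0 < ⟪R x, x⟫)
    (hRR : ∀ x : E, R (R x) = CX x)
    -- `T` is the symmetric positive definite square root of `Cov[φ(X)] = φ ∘ CX ∘ φ⁻¹`
    (T : F ≃ₗ[ℝ] F)
    (hTsym : ∀ x y : F, ⟪T x, y⟫ = ⟪x, T y⟫)
    (hTpos : ∀ x : F, x ≠ 0 → 0 < ⟪T x, x⟫)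
    (hTT : ∀ y : F, T (T y) = φ (CX (φ.symm y)))
    -- the weighted covariance operators of `X` and of `φ(X)`
    (Cw : E →ₗ[ℝ] E)
    (hCw : ∀ x y : E, ⟪Cw x, y⟫ =
      ∫ ω, (w ‖R.symm (X ω - ∫ ω', X ω' ∂μ)‖) ^ 2 *
        (⟪X ω - ∫ ω', X ω' ∂μ, x⟫ * ⟪X ω - ∫ ω', X ω' ∂μ, y⟫) ∂μ)
    (Cw' : F →ₗ[ℝ] F)
    (hCw' : ∀ x y : F, ⟪Cw' x, y⟫ =
      ∫ ω, (w ‖T.symm (φ (X ω) - ∫ ω', φ (X ω') ∂μ)‖) ^ 2 *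
        (⟪φ (X ω) - ∫ ω', φ (X ω') ∂μ, x⟫ * ⟪φ (X ω) - ∫ ω', φ (X ω') ∂μ, y⟫) ∂μ) :
    ∀ y : F, Cw' y = φ (Cw (φ.symm y)) := by
  have hT : (T : F →ₗ[ℝ] F) = φ.toLinearMap ∘ₗ (R : E →ₗ[ℝ] E) ∘ₗ φ.symm.toLinearMap :=
    LinearMap.IsPositive.eq_conj_of_mul_self_eq_conj φ
      (LinearMap.IsSymmetric.isPositive_of_inner_pos hRsym hRpos)
      (LinearMap.IsSymmetric.isPositive_of_inner_pos hTsym hTpos)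
      (fun y => by simp [hTT, hRR])
  have hTsymm (x : E) : T.symm (φ x) = φ (R.symm x) := by
    rw [T.symm_apply_eq]
    simpa using (LinearMap.congr_fun hT (φ (R.symm x))).symm
  have hcenter (ω : Ω) : φ (X ω) - ∫ ω', φ (X ω') ∂μ = φ (X ω - ∫ ω', X ω' ∂μ) := by
    rw [map_sub]
    exact congrArg _ (φ.toContinuousLinearEquiv.integral_comp_comm X)
  intro y
  refine ext_inner_right ℝ fun z => ?_
  rw [hCw', φ.inner_map_eq_flip, hCw]
  congr 1 with ω
  simp only [hcenter, hTsymm, φ.norm_map, φ.inner_map_eq_flip]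

/-- Transport of the `w`-weighted covariance operator along a linear isometric
isomorphism: `Cov_w[φ(X)] = φ ∘ Cov_w[X] ∘ φ⁻¹`. Here `R` (resp. `T`) is the unique
symmetric positive definite square root of `Cov[X]` (resp. of
`Cov[φ(X)] = φ ∘ Cov[X] ∘ φ⁻¹`), so that `R.symm` plays the role of `Cov[X]^{-1/2}`. -/
theorem covw_isometry_transport {E F : Type*}
    [NormedAddCommGroup E] [InnerProductSpace ℝ E] [FiniteDimensional ℝ E]
    [NormedAddCommGroup F] [InnerProductSpace ℝ F] [FiniteDimensional ℝ F]
    {Ω : Type*} [MeasureSpace Ω] {μ : Measure Ω} [IsProbabilityMeasure μ]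
    (φ : E ≃ₗᵢ[ℝ] F)
    (w : ℝ → ℝ) (hw : Measurable w)
    (X : Ω → E) (hX : Integrable X μ) (hX2 : MemLp X 2 μ)
    -- the covariance operator of `X`, assumed invertible
    (CX : E →ₗ[ℝ] E)
    (hCX : ∀ x y : E, ⟪CX x, y⟫ =
      ∫ ω, ⟪X ω - ∫ ω', X ω' ∂μ, x⟫ * ⟪X ω - ∫ ω', X ω' ∂μ, y⟫ ∂μ)
    -- `R` is the symmetric positive definite square root of `CX`
    (R : E ≃ₗ[ℝ] E)
    (hRsym : ∀ x y : E, ⟪R x, y⟫ = ⟪x, R y⟫)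
    (hRpos : ∀ x : E, x ≠ 0 → 0 < ⟪R x, x⟫)
    (hRR : ∀ x : E, R (R x) = CX x)
    -- `T` is the symmetric positive definite square root of `Cov[φ(X)] = φ ∘ CX ∘ φ⁻¹`
    (T : F ≃ₗ[ℝ] F)
    (hTsym : ∀ x y : F, ⟪T x, y⟫ = ⟪x, T y⟫)
    (hTpos : ∀ x : F, x ≠ 0 → 0 < ⟪T x, x⟫)
    (hTT : ∀ y : F, T (T y) = φ (CX (φ.symm y)))
    -- square-integrability of the weighted centred variable
    (hL2 : MemLp (fun ω => w ‖R.symm (X ω - ∫ ω', X ω' ∂μ)‖ • (X ω - ∫ ω', X ω' ∂μ)) 2 μ)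
    -- the weighted covariance operators of `X` and of `φ(X)`
    (Cw : E →ₗ[ℝ] E)
    (hCw : ∀ x y : E, ⟪Cw x, y⟫ =
      ∫ ω, (w ‖R.symm (X ω - ∫ ω', X ω' ∂μ)‖) ^ 2 *
        (⟪X ω - ∫ ω', X ω' ∂μ, x⟫ * ⟪X ω - ∫ ω', X ω' ∂μ, y⟫) ∂μ)
    (Cw' : F →ₗ[ℝ] F)
    (hCw' : ∀ x y : F, ⟪Cw' x, y⟫ =
      ∫ ω, (w ‖T.symm (φ (X ω) - ∫ ω', φ (X ω') ∂μ)‖) ^ 2 *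
        (⟪φ (X ω) - ∫ ω', φ (X ω') ∂μ, x⟫ * ⟪φ (X ω) - ∫ ω', φ (X ω') ∂μ, y⟫) ∂μ) :
    ∀ y : F, Cw' y = φ (Cw (φ.symm y)) :=
  covw_isometry_transport_general φ w X CX R hRsym hRpos hRR T hTsym hTpos hTT Cw hCw Cw' hCw'
end
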